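/- arXiv:1705.06545 — 2 statements merged into one kernel-verified Lean document; each statement's English description precedes it below -/
import Mathlib

section
/- For positive integers k and l, iterating the contraction operator 2r times annihilates the element X = e1^{k+l-1}e2^{l+1} ⊗ e1^{k+l}e2^l + e1^{k+l}e2^l ⊗ e1^{k+l-1}e2^{l+1} of S^{k+2l}(C^2) ⊗ S^{k+2l}(C^2) if and only if r ≥ l+1. -/
open fwdDiff Finset

/-- Coefficient model of `S^n(ℂ²) ⊗ S^n(ℂ²)`: `basisEl n p q` is the basis tensor
`e₁^{n-p}e₂^p ⊗ e₁^{n-q}e₂^q`, regarded as `0` when exponents are out of range. -/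
noncomputable def basisEl (n p q : ℤ) : ℤ → ℤ → ℂ :=
  fun a b => if a = p ∧ b = q ∧ 0 ≤ p ∧ p ≤ n ∧ 0 ≤ q ∧ q ≤ n then 1 else 0

/-- The contraction operator `C` induced by `ω(e₁,e₂) = 1`:
`C(e₁^{n-p}e₂^p ⊗ e₁^{n-q}e₂^q)
  = e₁^{n-p-1}e₂^p ⊗ e₁^{n-q}e₂^{q-1} − e₁^{n-p}e₂^{p-1} ⊗ e₁^{n-q-1}e₂^q`. -/
noncomputable def contraction (t : ℤ → ℤ → ℂ) : ℤ → ℤ → ℂ :=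
  fun p q => t p (q + 1) - t (p + 1) q

/-- Contraction of a diagonally-supported tensor. -/
lemma contraction_iter_diag (m : ℕ) : ∀ (d : ℤ → ℂ) (s : ℤ) (p q : ℤ),
    contraction^[m] (fun p q => if p + q = s then d p else 0) p q
      = if p + q = s - m then ((-1 : ℂ) ^ m * (Δ_[(1:ℤ)])^[m] d p) else 0 := by
  induction m with
  | zero => intro d s p q; simp
  | succ m ih =>
    intro d s p q
    rw [Function.iterate_succ_apply]
    have h1 : contraction (fun p q => if p + q = s then d p else 0)
        = fun p q => if p + q = s - 1 then ((-1 : ℂ) • Δ_[(1:ℤ)] d) p else 0 := by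
      funext p q
      simp only [contraction, fwdDiff, Pi.smul_apply, smul_eq_mul]
      by_cases h : p + q = s - 1
      · have h2 : p + (q + 1) = s := by omega
        have h3 : (p + 1) + q = s := by omega
        simp [h, h2, h3]
      · have h2 : ¬ p + (q + 1) = s := by omega
        have h3 : ¬ (p + 1) + q = s := by omega
        simp [h, h2, h3]
    rw [h1, ih ((-1 : ℂ) • Δ_[(1:ℤ)] d) (s - 1) p q]
    have h4 : (Δ_[(1:ℤ)])^[m] ((-1 : ℂ) • Δ_[(1:ℤ)] d) = (-1 : ℂ) • (Δ_[(1:ℤ)])^[m+1] d := by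
      rw [fwdDiff_iter_const_smul, Function.iterate_succ_apply]
    rw [h4]
    simp only [Pi.smul_apply, smul_eq_mul]
    push_cast
    by_cases h : p + q = s - m - 1
    · rw [if_pos (by omega), if_pos (by omega)]
      ring
    · rw [if_neg (by omega), if_neg (by omega)]

lemma central_lt (r : ℕ) (hr : 1 ≤ r) : (2 * r).choose (r + 1) < (2 * r).choose r := by
  have h := Nat.choose_succ_right_eq (2 * r) r
  have h2 : 2 * r - r = r := by omega
  rw [h2] at h
  have hpos : 0 < (2 * r).choose r := Nat.choose_pos (by omega)
  nlinarith

/-- For positive integers `k`, `l`, iterating the contraction operator `2r` times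
annihilates `X = e₁^{k+l-1}e₂^{l+1} ⊗ e₁^{k+l}e₂^l + e₁^{k+l}e₂^l ⊗ e₁^{k+l-1}e₂^{l+1}`
in `S^{k+2l}(ℂ²) ⊗ S^{k+2l}(ℂ²)` (i.e. the result vanishes as an element of
`S^{k+2l-2r}(ℂ²) ⊗ S^{k+2l-2r}(ℂ²)`) if and only if `r ≥ l + 1`. -/
theorem iterated_contraction_annihilates_iff (k l r : ℕ) (hk : 1 ≤ k) (hl : 1 ≤ l) :
    (∀ a b : ℤ, 0 ≤ a → a ≤ (k + 2 * l : ℤ) - 2 * r →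
        0 ≤ b → b ≤ (k + 2 * l : ℤ) - 2 * r →
      contraction^[2 * r]
        (fun x y => basisEl (k + 2 * l) (l + 1) l x y
          + basisEl (k + 2 * l) l (l + 1) x y) a b = 0)
    ↔ l + 1 ≤ r := by
  set f : ℤ → ℂ := fun p => (if p = (l : ℤ) then 1 else 0) + (if p = (l : ℤ) + 1 then 1 else 0)
    with hf
  have hfl : f ((l : ℤ)) = 1 := by
    have h : ¬ ((l : ℤ) = (l : ℤ) + 1) := by omega
    simp [hf, h]
  have hfl1 : f ((l : ℤ) + 1) = 1 := by
    have h : ¬ ((l : ℤ) + 1 = (l : ℤ)) := by omega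
    simp [hf, h]
  have hdiag : (fun x y => basisEl (k + 2 * l) (l + 1) l x y
          + basisEl (k + 2 * l) l (l + 1) x y)
      = fun p q => if p + q = 2 * (l : ℤ) + 1 then f p else 0 := by
    funext p q
    simp only [basisEl, hf]
    have hk' : (1 : ℤ) ≤ k := by exact_mod_cast hk
    have hl' : (1 : ℤ) ≤ l := by exact_mod_cast hl
    by_cases h1 : p = (l : ℤ) + 1 ∧ q = (l : ℤ)
    · obtain ⟨hp, hq⟩ := h1
      subst hp hq
      rw [if_pos ⟨rfl, rfl, by omega, by omega, by omega, by omega⟩,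
          if_neg (by omega), if_pos (by omega), if_neg (by omega), if_pos rfl]
      ring
    · by_cases h2 : p = (l : ℤ) ∧ q = (l : ℤ) + 1
      · obtain ⟨hp, hq⟩ := h2
        subst hp hq
        rw [if_neg (by omega), if_pos ⟨rfl, rfl, by omega, by omega, by omega, by omega⟩,
            if_pos (by omega), if_pos rfl, if_neg (by omega)]
        ring
      · rw [if_neg (by tauto), if_neg (by tauto)]
        by_cases h3 : p + q = 2 * (l : ℤ) + 1
        · rw [if_pos h3, if_neg (by omega), if_neg (by omega)]
        · rw [if_neg h3]
          ring
  rw [hdiag]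
  constructor
  · -- if annihilated then r ≥ l + 1; contrapositive
    intro hzero
    by_contra hr
    push_neg at hr
    have hrl : r ≤ l := by omega
    -- evaluate at a = l - r, b = l + 1 - r
    have hval := hzero ((l : ℤ) - r) ((l : ℤ) + 1 - r) (by omega)
      (by omega) (by omega) (by omega)
    rw [contraction_iter_diag] at hval
    rw [if_pos (by push_cast; omega)] at hval
    have hsgn : ((-1 : ℂ)) ^ (2 * r) ≠ 0 := by simp
    have hD : (Δ_[(1:ℤ)])^[2 * r] f ((l : ℤ) - r) = 0 := by
      rcases mul_eq_zero.mp hval with h | h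
      · exact absurd h hsgn
      · exact h
    rw [fwdDiff_iter_eq_sum_shift] at hD
    -- identify the two nonzero terms of the sum
    have hterm : ∀ i ∈ range (2 * r + 1),
        ((-1 : ℤ) ^ (2 * r - i) * (2 * r).choose i) • f ((l : ℤ) - r + i • (1:ℤ))
        = (if i = r then ((-1 : ℤ) ^ r * (2 * r).choose r : ℂ) else 0)
          + (if i = r + 1 then -((-1 : ℤ) ^ r * (2 * r).choose (r + 1) : ℂ) else 0) := by
      intro i hi
      simp only [mem_range] at hi
      have e1 : (l : ℤ) - r + i • (1:ℤ) = (l : ℤ) - r + i := by simp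
      rw [e1]
      by_cases h1 : i = r
      · subst h1
        have e2 : (l : ℤ) - i + i = (l : ℤ) := by ring
        have e3 : 2 * i - i = i := by omega
        rw [e2, hfl, e3, if_pos rfl, if_neg (by omega)]
        rw [zsmul_eq_mul]
        push_cast
        ring
      · by_cases h2 : i = r + 1
        · subst h2
          have hr1 : 1 ≤ r := by omega
          have e2 : (l : ℤ) - r + ((r + 1 : ℕ) : ℤ) = (l : ℤ) + 1 := by push_cast; ring
          have e3 : 2 * r - (r + 1) = r - 1 := by omega
          have e4 : ((-1 : ℤ)) ^ (r - 1) = -((-1 : ℤ)) ^ r := by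
            obtain ⟨s, rfl⟩ : ∃ s, r = s + 1 := ⟨r - 1, by omega⟩
            simp [pow_succ]
          rw [e2, hfl1, e3, e4, if_neg (by omega), if_pos rfl]
          rw [zsmul_eq_mul]
          push_cast
          ring
        · have e0 : f ((l : ℤ) - r + i) = 0 := by
            simp only [hf]
            rw [if_neg (by omega), if_neg (by omega)]
            ring
          rw [e0, if_neg h1, if_neg h2]
          simp
    rw [Finset.sum_congr rfl hterm, Finset.sum_add_distrib,
        Finset.sum_ite_eq' (range (2 * r + 1)) r,
        Finset.sum_ite_eq' (range (2 * r + 1)) (r + 1)] at hD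
    by_cases hr0 : r = 0
    · subst hr0
      simp at hD
    · have hr1 : 1 ≤ r := by omega
      rw [if_pos (by simp; omega), if_pos (by simp; omega)] at hD
      have hlt := central_lt r hr1
      have hne : ((2 * r).choose (r + 1) : ℂ) ≠ ((2 * r).choose r : ℂ) := by
        exact_mod_cast Nat.ne_of_lt hlt
      apply hne
      have hs : (((-1 : ℤ) ^ r : ℤ) : ℂ) ≠ 0 := by simp
      have hkey : (((-1 : ℤ) ^ r : ℤ) : ℂ)
          * (((2 * r).choose r : ℂ) - ((2 * r).choose (r + 1) : ℂ)) = 0 := by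
        rw [mul_sub]
        push_cast at hD ⊢
        linear_combination hD
      rcases mul_eq_zero.mp hkey with h | h
      · exact absurd h hs
      · linear_combination -h
  · -- r ≥ l + 1 implies annihilation
    intro hr a b ha _ hb _
    rw [contraction_iter_diag]
    rw [if_neg (by push_cast; omega)]
end

section
/- The kernel of the contraction operator C : S^n(C^2) ⊗ S^n(C^2) → S^{n-1}(C^2) ⊗ S^{n-1}(C^2) is exactly the top Clebsch–Gordan component S^{2n}(C^2), i.e. the image of the natural multiplication-induced embedding S^{2n}(C^2) ↪ S^n(C^2) ⊗ S^n(C^2); equivalently, ker C has dimension 2n+1. -/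
/-- The contraction operator `C : S^n(ℂ²) ⊗ S^n(ℂ²) → S^{n-1}(ℂ²) ⊗ S^{n-1}(ℂ²)`,
in the coefficient model where a tensor of `S^n(ℂ²) ⊗ S^n(ℂ²)` is the family of its
coefficients on the basis `e₁^{n-p}e₂^p ⊗ e₁^{n-q}e₂^q`, `0 ≤ p, q ≤ n`:
`C(e₁^{n-p}e₂^p ⊗ e₁^{n-q}e₂^q)
  = e₁^{n-p-1}e₂^p ⊗ e₁^{n-q}e₂^{q-1} − e₁^{n-p}e₂^{p-1} ⊗ e₁^{n-q-1}e₂^q`. -/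
noncomputable def contractionL (n : ℕ) :
    (Fin (n + 1) → Fin (n + 1) → ℂ) →ₗ[ℂ] (Fin n → Fin n → ℂ) where
  toFun t := fun p q => t p.castSucc q.succ - t p.succ q.castSucc
  map_add' x y := by funext p q; simp; ring
  map_smul' c x := by funext p q; simp [smul_eq_mul]; ring

/-- The natural multiplication-induced embedding `S^{2n}(ℂ²) ↪ S^n(ℂ²) ⊗ S^n(ℂ²)`
(the transpose of the multiplication map `e₁^{n-p}e₂^p ⊗ e₁^{n-q}e₂^q ↦
e₁^{2n-p-q}e₂^{p+q}`), in coefficients. -/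
noncomputable def cartanEmbed (n : ℕ) :
    (Fin (2 * n + 1) → ℂ) →ₗ[ℂ] (Fin (n + 1) → Fin (n + 1) → ℂ) where
  toFun f := fun p q => f ⟨(p : ℕ) + (q : ℕ), by have := p.isLt; have := q.isLt; omega⟩
  map_add' x y := rfl
  map_smul' c x := rfl

/-- The kernel of the contraction operator `C` on `S^n(ℂ²) ⊗ S^n(ℂ²)` is exactly the
top Clebsch–Gordan component: the image of the natural embedding
`S^{2n}(ℂ²) ↪ S^n(ℂ²) ⊗ S^n(ℂ²)`; equivalently, `ker C` has dimension `2n + 1`. -/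
theorem ker_contraction_eq_cartan (n : ℕ) :
    LinearMap.ker (contractionL n) = LinearMap.range (cartanEmbed n) ∧
    Module.finrank ℂ (LinearMap.ker (contractionL n)) = 2 * n + 1 := by
  have hker : LinearMap.ker (contractionL n) = LinearMap.range (cartanEmbed n) := by
    ext t
    simp only [LinearMap.mem_ker, LinearMap.mem_range]
    constructor
    · intro h
      have hc : ∀ p q : Fin n, t p.castSucc q.succ = t p.succ q.castSucc := by
        intro p q
        have := congrFun (congrFun h p) q
        simpa [contractionL, sub_eq_zero] using this
      have step : ∀ (p q : ℕ) (hp : p < n) (hq : q < n),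
          t ⟨p, by omega⟩ ⟨q+1, by omega⟩ = t ⟨p+1, by omega⟩ ⟨q, by omega⟩ := by
        intro p q hp hq
        have := hc ⟨p, hp⟩ ⟨q, hq⟩
        simpa [Fin.castSucc, Fin.succ, Fin.castAdd, Fin.castLE] using this
      have chain : ∀ (d p q : ℕ) (hp : p + d ≤ n) (hq : q < n + 1) (hd : d ≤ q),
          t ⟨p, by omega⟩ ⟨q, hq⟩ = t ⟨p + d, by omega⟩ ⟨q - d, by omega⟩ := by
        intro d
        induction d with
        | zero => intro p q hp hq hd; simp
        | succ d ih =>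
          intro p q hp hq hd
          have h1 : t ⟨p, by omega⟩ ⟨q, hq⟩ = t ⟨p+1, by omega⟩ ⟨q-1, by omega⟩ := by
            have := step p (q-1) (by omega) (by omega)
            have hq1 : q - 1 + 1 = q := by omega
            rw [show (⟨q, hq⟩ : Fin (n+1)) = ⟨q-1+1, by omega⟩ from Fin.ext (by simp [hq1])]
            exact this
          rw [h1, ih (p+1) (q-1) (by omega) (by omega) (by omega)]
          congr 1 <;> apply Fin.ext <;> simp <;> omega
      have key : ∀ p q p' q' : Fin (n+1), (p:ℕ) + q = (p':ℕ) + q' → t p q = t p' q' := by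
        intro p q p' q' hpq
        rcases le_total (p : ℕ) (p' : ℕ) with hle | hle
        · have := chain ((p':ℕ) - p) p q (by omega) q.isLt (by omega)
          rw [show p = (⟨(p:ℕ), by omega⟩ : Fin (n+1)) from Fin.ext rfl] at *
          calc t ⟨(p:ℕ), by omega⟩ q = t ⟨(p:ℕ), by omega⟩ ⟨(q:ℕ), q.isLt⟩ := by congr 1
            _ = t ⟨(p:ℕ) + ((p':ℕ) - p), by omega⟩ ⟨(q:ℕ) - ((p':ℕ) - p), by omega⟩ := this
            _ = t p' q' := by congr 1 <;> apply Fin.ext <;> simp <;> omega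
        · have := chain ((p:ℕ) - p') p' q' (by omega) q'.isLt (by omega)
          calc t p q = t ⟨(p':ℕ) + ((p:ℕ) - p'), by omega⟩ ⟨(q':ℕ) - ((p:ℕ) - p'), by omega⟩ := by
                congr 1 <;> apply Fin.ext <;> simp <;> omega
            _ = t p' q' := by
                rw [← this]
      refine ⟨fun k => t ⟨min (k:ℕ) n, by omega⟩ ⟨(k : ℕ) - min (k:ℕ) n, by omega⟩, ?_⟩
      funext p q
      show t ⟨min _ n, _⟩ ⟨_ - min _ n, _⟩ = t p q
      apply key
      simp only []
      have := p.isLt; have := q.isLt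
      omega
    · rintro ⟨f, rfl⟩
      funext p q
      show f _ - f _ = 0
      rw [sub_eq_zero]
      congr 1
      apply Fin.ext
      simp [Fin.castSucc, Fin.succ, Fin.castAdd, Fin.castLE]
      omega
  refine ⟨hker, ?_⟩
  have hinj : Function.Injective (cartanEmbed n) := by
    rw [← LinearMap.ker_eq_bot]
    ext f
    simp only [LinearMap.mem_ker, Submodule.mem_bot]
    constructor
    · intro hf
      funext k
      have := congrFun (congrFun hf ⟨min (k:ℕ) n, by omega⟩) ⟨(k:ℕ) - min (k:ℕ) n, by omega⟩
      have hk : (⟨min (k:ℕ) n + ((k:ℕ) - min (k:ℕ) n), by omega⟩ : Fin (2*n+1)) = k :=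
        Fin.ext (by simp)
      simpa [cartanEmbed, hk] using this
    · rintro rfl; rfl
  rw [hker, LinearMap.finrank_range_of_inj hinj]
  simp
end
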